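/- arXiv:2405.01677 — 5 statements merged into one kernel-verified Lean document; each statement's English description precedes it below -/
import Mathlib

section
/- Let w_{t+1} = w_t + η·(g_r⁺ + g_c⁺)/2 be the soft-switching projected-gradient update. If 0 < η ≤ 1/L and cos θ ≤ 0 (i.e. the reward and cost gradients conflict, 90° ≤ θ), then the performance improvement is lower bounded: f(w_{t+1}) − f(w_t) ≥ η·(3(1 − cos²θ)(‖g_r‖² + ‖g_c‖²) + 2 cos θ (1 − cos²θ)‖g_r‖‖g_c‖)/8. -/
/-!
The update moves along `d = g_r⁺ + g_c⁺` with step `η / 2`. Since `η L ≤ 1`, the descent lemma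
`f (x + v) ≥ f x + ⟪∇f x, v⟫ - L/2 ‖v‖²` gives
`f(w_{t+1}) - f(w_t) ≥ η/2 ⟪g_r + g_c, d⟫ - η/8 ‖d‖²`, and expanding the inner products yields
`⟪g_r + g_c, d⟫ = (1 - cos²θ)(‖g_r‖² + ‖g_c‖²)` and
`‖d‖² = (1 - cos²θ)(‖g_r‖² + ‖g_c‖² - 2 cos θ ‖g_r‖ ‖g_c‖)`.
-/

open RealInnerProductSpace

section LipschitzGradient

variable {E : Type*} [NormedAddCommGroup E] [InnerProductSpace ℝ E] [CompleteSpace E]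
  {f : E → ℝ} {L : ℝ}

theorem hasDerivAt_comp_add_smul (hf : Differentiable ℝ f) (x v : E) (t : ℝ) :
    HasDerivAt (fun s : ℝ => f (x + s • v)) ⟪gradient f (x + t • v), v⟫ t := by
  have hline : HasDerivAt (fun s : ℝ => x + s • v) v t := by
    simpa using ((hasDerivAt_id t).smul_const v).const_add x
  simpa [InnerProductSpace.toDual_apply_apply, Function.comp_def] using
    (hf (x + t • v)).hasGradientAt.hasFDerivAt.comp_hasDerivAt t hline

theorem inner_gradient_sub_le_of_lipschitz
    (hlip : ∀ x y : E, ‖gradient f x - gradient f y‖ ≤ L * ‖x - y‖)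
    (x v : E) {t : ℝ} (ht : 0 ≤ t) :
    ⟪gradient f x - gradient f (x + t • v), v⟫ ≤ L * t * ‖v‖ ^ 2 :=
  calc ⟪gradient f x - gradient f (x + t • v), v⟫
      ≤ ‖gradient f x - gradient f (x + t • v)‖ * ‖v‖ := real_inner_le_norm _ _
    _ ≤ L * ‖x - (x + t • v)‖ * ‖v‖ := by gcongr; exact hlip _ _
    _ = L * t * ‖v‖ ^ 2 := by
      rw [sub_add_cancel_left, norm_neg, norm_smul, Real.norm_of_nonneg ht]; ring

theorem image_add_ge_of_lipschitz_gradient (hf : Differentiable ℝ f)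
    (hlip : ∀ x y : E, ‖gradient f x - gradient f y‖ ≤ L * ‖x - y‖) (x v : E) :
    f x + ⟪gradient f x, v⟫ - L / 2 * ‖v‖ ^ 2 ≤ f (x + v) := by
  -- `h` has derivative `⟪∇f (x + t v) - ∇f x, v⟫ + L t ‖v‖² ≥ 0` for `t ≥ 0`.
  set h : ℝ → ℝ := fun t => f (x + t • v) - t * ⟪gradient f x, v⟫ + L / 2 * t ^ 2 * ‖v‖ ^ 2
  have hderiv : ∀ t, HasDerivAt h
      (⟪gradient f (x + t • v), v⟫ - ⟪gradient f x, v⟫ + L * t * ‖v‖ ^ 2) t := fun t => by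
    refine ((hasDerivAt_comp_add_smul hf x v t).sub (hasDerivAt_mul_const _)).add ?_
    exact (((hasDerivAt_pow 2 t).const_mul (L / 2)).mul_const (‖v‖ ^ 2)).congr_deriv
      (by push_cast; ring)
  have hmono : MonotoneOn h (Set.Ici 0) := by
    refine monotoneOn_of_hasDerivWithinAt_nonneg (convex_Ici 0)
      (fun t _ => (hderiv t).continuousAt.continuousWithinAt)
      (fun t _ => (hderiv t).hasDerivWithinAt) fun t ht => ?_
    rw [interior_Ici] at ht
    have := inner_gradient_sub_le_of_lipschitz hlip x v (le_of_lt ht)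
    rw [inner_sub_left] at this
    linarith
  have := hmono (Set.mem_Ici.2 le_rfl) (zero_le_one' ℝ) zero_le_one
  simp only [h, zero_smul, add_zero, one_smul, zero_mul, sub_zero, one_mul, ne_eq,
    OfNat.ofNat_ne_zero, not_false_eq_true, zero_pow, mul_zero, one_pow, mul_one] at this
  linarith

theorem image_add_half_smul_ge_of_lipschitz_gradient (hf : Differentiable ℝ f)
    (hlip : ∀ x y : E, ‖gradient f x - gradient f y‖ ≤ L * ‖x - y‖)
    {η : ℝ} (hη : 0 ≤ η) (hLη : L * η ≤ 1) (x d : E) :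
    f x + η / 2 * ⟪gradient f x, d⟫ - η / 8 * ‖d‖ ^ 2 ≤ f (x + (η / 2) • d) := by
  have descent := image_add_ge_of_lipschitz_gradient hf hlip x ((η / 2) • d)
  rw [real_inner_smul_right, norm_smul, Real.norm_of_nonneg (by positivity), mul_pow] at descent
  nlinarith [mul_nonneg (mul_nonneg hη (sq_nonneg ‖d‖)) (sub_nonneg.2 hLη)]

end LipschitzGradient

section Rejections

open InnerProductGeometry

variable {E : Type*} [NormedAddCommGroup E] [InnerProductSpace ℝ E] {a b : E}

theorem inner_add_rejections (ha : a ≠ 0) (hb : b ≠ 0) :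
    ⟪a + b, (a - (⟪a, b⟫ / ‖b‖ ^ 2) • b) + (b - (⟪a, b⟫ / ‖a‖ ^ 2) • a)⟫
      = (1 - Real.cos (angle a b) ^ 2) * (‖a‖ ^ 2 + ‖b‖ ^ 2) := by
  have ha' : ‖a‖ ≠ 0 := norm_ne_zero_iff.2 ha
  have hb' : ‖b‖ ≠ 0 := norm_ne_zero_iff.2 hb
  simp only [cos_angle, inner_add_left, inner_add_right, inner_sub_right, real_inner_smul_right,
    real_inner_self_eq_norm_sq, real_inner_comm b a]
  field_simp
  ring

theorem norm_add_rejections_sq (ha : a ≠ 0) (hb : b ≠ 0) :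
    ‖(a - (⟪a, b⟫ / ‖b‖ ^ 2) • b) + (b - (⟪a, b⟫ / ‖a‖ ^ 2) • a)‖ ^ 2
      = (1 - Real.cos (angle a b) ^ 2) * (‖a‖ ^ 2 + ‖b‖ ^ 2)
        - 2 * ‖a‖ * ‖b‖ * Real.cos (angle a b) * (1 - Real.cos (angle a b) ^ 2) := by
  have ha' : ‖a‖ ≠ 0 := norm_ne_zero_iff.2 ha
  have hb' : ‖b‖ ≠ 0 := norm_ne_zero_iff.2 hb
  rw [← real_inner_self_eq_norm_sq]
  simp only [cos_angle, inner_add_left, inner_add_right, inner_sub_left, inner_sub_right,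
    real_inner_smul_left, real_inner_smul_right, real_inner_self_eq_norm_sq,
    norm_smul, Real.norm_eq_abs, mul_pow, sq_abs, real_inner_comm b a]
  field_simp
  ring

end Rejections

theorem pcrpo_projected_update_lower_bound_general
    {E : Type*} [NormedAddCommGroup E] [InnerProductSpace ℝ E] [CompleteSpace E]
    (f : E → ℝ) (L : ℝ) (hL : 0 < L)
    (hf : Differentiable ℝ f)
    (hlip : ∀ x y : E, ‖gradient f x - gradient f y‖ ≤ L * ‖x - y‖)
    (gr gc : E) (hgr : gr ≠ 0) (hgc : gc ≠ 0)
    (grp gcp : E)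
    (hgrp : grp = gr - (⟪gr, gc⟫ / ‖gc‖ ^ 2) • gc)
    (hgcp : gcp = gc - (⟪gr, gc⟫ / ‖gr‖ ^ 2) • gr)
    (cosθ : ℝ) (hcos : cosθ = ⟪gr, gc⟫ / (‖gr‖ * ‖gc‖))
    (wt : E) (hw : gradient f wt = gr + gc)
    (η : ℝ) (hη0 : 0 < η) (hηL : η ≤ 1 / L)
    (wt1 : E) (hupdate : wt1 = wt + (η / 2) • (grp + gcp)) :
    f wt1 - f wt ≥
      η * (3 * (1 - cosθ ^ 2) * (‖gr‖ ^ 2 + ‖gc‖ ^ 2)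
        + 2 * cosθ * (1 - cosθ ^ 2) * ‖gr‖ * ‖gc‖) / 8 := by
  rw [← InnerProductGeometry.cos_angle] at hcos
  have hinner : ⟪gr + gc, grp + gcp⟫ = (1 - cosθ ^ 2) * (‖gr‖ ^ 2 + ‖gc‖ ^ 2) := by
    rw [hgrp, hgcp, inner_add_rejections hgr hgc, hcos]
  have hnorm : ‖grp + gcp‖ ^ 2 = (1 - cosθ ^ 2) * (‖gr‖ ^ 2 + ‖gc‖ ^ 2)
      - 2 * ‖gr‖ * ‖gc‖ * cosθ * (1 - cosθ ^ 2) := by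
    rw [hgrp, hgcp, norm_add_rejections_sq hgr hgc, hcos]
  have hLη : L * η ≤ 1 := by rwa [le_div_iff₀ hL, mul_comm] at hηL
  have step := image_add_half_smul_ge_of_lipschitz_gradient hf hlip hη0.le hLη wt (grp + gcp)
  rw [hw, hinner, hnorm, ← hupdate] at step
  linarith

/-- Lower bound on performance improvement of the soft-switching
projected-gradient update when the reward and cost gradients conflict
(`cos θ ≤ 0`, i.e. `90° ≤ θ`). -/
theorem pcrpo_projected_update_lower_bound
    {E : Type*} [NormedAddCommGroup E] [InnerProductSpace ℝ E] [CompleteSpace E]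
    (f : E → ℝ) (L : ℝ) (hL : 0 < L)
    (hf : Differentiable ℝ f)
    (hlip : ∀ x y : E, ‖gradient f x - gradient f y‖ ≤ L * ‖x - y‖)
    (gr gc : E) (hgr : gr ≠ 0) (hgc : gc ≠ 0)
    (grp gcp : E)
    (hgrp : grp = gr - (⟪gr, gc⟫ / ‖gc‖ ^ 2) • gc)
    (hgcp : gcp = gc - (⟪gr, gc⟫ / ‖gr‖ ^ 2) • gr)
    (cosθ : ℝ) (hcos : cosθ = ⟪gr, gc⟫ / (‖gr‖ * ‖gc‖))
    (hconflict : cosθ ≤ 0)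
    (wt : E) (hw : gradient f wt = gr + gc)
    (η : ℝ) (hη0 : 0 < η) (hηL : η ≤ 1 / L)
    (wt1 : E) (hupdate : wt1 = wt + (η / 2) • (grp + gcp)) :
    f wt1 - f wt ≥
      η * (3 * (1 - cosθ ^ 2) * (‖gr‖ ^ 2 + ‖gc‖ ^ 2)
        + 2 * cosθ * (1 - cosθ ^ 2) * ‖gr‖ * ‖gc‖) / 8 :=
  pcrpo_projected_update_lower_bound_general f L hL hf hlip gr gc hgr hgc grp gcp hgrp hgcp cosθ
    hcos wt hw η hη0 hηL wt1 hupdate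
end

section
/- Monotonic improvement for conflicting gradients: let w_{t+1} = w_t + η·(g_r⁺ + g_c⁺)/2 with 0 < η ≤ 1/L. If −1 < cos θ ≤ 0 (i.e. 90° ≤ θ < 180°, so sin θ ≠ 0), then f(w_{t+1}) − f(w_t) > 0, i.e. the projected-gradient update strictly improves the performance. -/
/-!
The update direction `p = g_r⁺ + g_c⁺` satisfies `2⟪g_r + g_c, p⟫ - ‖p‖² = ‖g_r⁺ - g_c⁺‖²`, because
each projected gradient is orthogonal to the other gradient and `⟪g_r, g_r⁺⟫ = ‖g_r⁺‖²`; the right-hand side is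
positive as soon as `g_r` and `g_c` are not parallel (`|cos θ| < 1`), since pairing `g_r⁺ - g_c⁺`
with `g_r` gives `‖g_r⁺‖² > 0`. The descent lemma with step `η/2`, `Lη ≤ 1`, bounds
`f(w_{t+1}) - f(w_t)` from below by `η/4` times that quantity.
-/

open RealInnerProductSpace

section Rejection

variable {E : Type*} [NormedAddCommGroup E] [InnerProductSpace ℝ E]

/-- `rejection g_r g_c` is the paper's `g_r⁺`; for `v = 0` it is `u`, since `x / 0 = 0`. -/
noncomputable def rejection (u v : E) : E := u - (⟪u, v⟫ / ‖v‖ ^ 2) • v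

theorem inner_rejection_self (u v : E) : ⟪rejection u v, v⟫ = 0 := by
  rcases eq_or_ne v 0 with rfl | hv
  · simp
  · have : ‖v‖ ≠ 0 := norm_ne_zero_iff.mpr hv
    rw [rejection, inner_sub_left, real_inner_smul_left, real_inner_self_eq_norm_sq]
    field_simp
    ring

theorem inner_self_rejection (u v : E) : ⟪v, rejection u v⟫ = 0 := by
  rw [real_inner_comm, inner_rejection_self]

theorem inner_rejection_left (u v : E) : ⟪u, rejection u v⟫ = ‖rejection u v‖ ^ 2 := by
  have hu : u = rejection u v + (⟪u, v⟫ / ‖v‖ ^ 2) • v := by rw [rejection, sub_add_cancel]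
  nth_rewrite 1 [hu]
  rw [inner_add_left, real_inner_self_eq_norm_sq, real_inner_smul_left, inner_self_rejection,
    mul_zero, add_zero]

theorem norm_sq_rejection (u v : E) : ‖rejection u v‖ ^ 2 = ‖u‖ ^ 2 - ⟪u, v⟫ ^ 2 / ‖v‖ ^ 2 := by
  rw [← inner_rejection_left, rejection, inner_sub_right, real_inner_smul_right,
    real_inner_self_eq_norm_sq]
  ring

theorem norm_rejection_pos {u v : E} (h : ⟪u, v⟫ ^ 2 < ‖u‖ ^ 2 * ‖v‖ ^ 2) :
    0 < ‖rejection u v‖ := by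
  have hv : 0 < ‖v‖ ^ 2 := by
    by_contra! hv
    nlinarith [sq_nonneg ⟪u, v⟫, sq_nonneg ‖u‖, sq_nonneg ‖v‖]
  refine lt_of_pow_lt_pow_left₀ 2 (norm_nonneg _) ?_
  rw [zero_pow two_ne_zero, norm_sq_rejection, sub_pos, div_lt_iff₀ hv]
  exact h

theorem two_inner_add_rejection_sub_norm_sq (u v : E) :
    2 * ⟪u + v, rejection u v + rejection v u⟫ - ‖rejection u v + rejection v u‖ ^ 2
      = ‖rejection u v - rejection v u‖ ^ 2 := by
  have hcross : ⟪u + v, rejection u v + rejection v u⟫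
      = ‖rejection u v‖ ^ 2 + ‖rejection v u‖ ^ 2 := by
    rw [inner_add_left, inner_add_right, inner_add_right, inner_rejection_left,
      inner_rejection_left, inner_self_rejection, inner_self_rejection]
    ring
  rw [hcross, norm_add_sq_real, norm_sub_sq_real]
  ring

theorem rejection_sub_rejection_ne_zero {u v : E} (h : ⟪u, v⟫ ^ 2 < ‖u‖ ^ 2 * ‖v‖ ^ 2) :
    rejection u v - rejection v u ≠ 0 := by
  intro heq
  have hpair : ⟪rejection u v - rejection v u, u⟫ = ‖rejection u v‖ ^ 2 := by
    rw [inner_sub_left, inner_rejection_self, sub_zero, real_inner_comm, inner_rejection_left]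
  rw [heq, inner_zero_left] at hpair
  exact (norm_rejection_pos h).ne' (pow_eq_zero_iff two_ne_zero |>.mp hpair.symm)

theorem sq_inner_lt_of_abs_cos_lt_one {u v : E} (hu : u ≠ 0) (hv : v ≠ 0)
    (h : |⟪u, v⟫ / (‖u‖ * ‖v‖)| < 1) : ⟪u, v⟫ ^ 2 < ‖u‖ ^ 2 * ‖v‖ ^ 2 := by
  have huv : 0 < ‖u‖ * ‖v‖ := mul_pos (norm_pos_iff.mpr hu) (norm_pos_iff.mpr hv)
  rw [abs_div, abs_of_pos huv, div_lt_one huv] at h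
  rw [← mul_pow, sq_lt_sq, abs_of_pos huv]
  exact h

end Rejection

section Descent

variable {E : Type*} [NormedAddCommGroup E] [InnerProductSpace ℝ E] [CompleteSpace E]
  {f : E → ℝ} {L : ℝ}

theorem abs_sub_sub_inner_gradient_le (hL : 0 ≤ L) (hf : Differentiable ℝ f)
    (hlip : ∀ x y : E, ‖gradient f x - gradient f y‖ ≤ L * ‖x - y‖) (x y : E) :
    |f y - f x - ⟪gradient f x, y - x⟫| ≤ L * ‖y - x‖ ^ 2 := by
  have hbound : ∀ z ∈ segment ℝ x y, ‖fderiv ℝ f z - fderiv ℝ f x‖ ≤ L * ‖y - x‖ := by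
    intro z hz
    rw [← toDual_gradient, ← toDual_gradient, ← map_sub, LinearIsometryEquiv.norm_map]
    exact (hlip z x).trans (mul_le_mul_of_nonneg_left (norm_sub_le_of_mem_segment hz) hL)
  have := (convex_segment x y).norm_image_sub_le_of_norm_fderiv_le' (fun z _ => hf z) hbound
    (left_mem_segment ℝ x y) (right_mem_segment ℝ x y)
  rwa [inner_gradient_left, ← Real.norm_eq_abs, sq, ← mul_assoc]

theorem le_sub_of_gradient_step (hL : 0 ≤ L) (hf : Differentiable ℝ f)
    (hlip : ∀ x y : E, ‖gradient f x - gradient f y‖ ≤ L * ‖x - y‖)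
    {η : ℝ} (hη : 0 ≤ η) (hLη : L * η ≤ 1) (x p : E) :
    η / 4 * (2 * ⟪gradient f x, p⟫ - ‖p‖ ^ 2) ≤ f (x + (η / 2) • p) - f x := by
  have hdesc := abs_sub_sub_inner_gradient_le hL hf hlip x (x + (η / 2) • p)
  rw [add_sub_cancel_left, real_inner_smul_right, norm_smul, Real.norm_of_nonneg (by positivity),
    mul_pow] at hdesc
  have hcurv : L * ((η / 2) ^ 2 * ‖p‖ ^ 2) ≤ η / 4 * ‖p‖ ^ 2 := by
    have : L * η * η ≤ η := by nlinarith
    nlinarith [sq_nonneg ‖p‖]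
  linarith [(abs_le.mp hdesc).1]

end Descent

/-- Monotonic improvement for conflicting gradients: if
`-1 < cos θ ≤ 0` (i.e. `90° ≤ θ < 180°`), the projected-gradient update
strictly improves the performance. -/
theorem pcrpo_projected_update_monotonic_improvement
    {E : Type*} [NormedAddCommGroup E] [InnerProductSpace ℝ E] [CompleteSpace E]
    (f : E → ℝ) (L : ℝ) (hL : 0 < L)
    (hf : Differentiable ℝ f)
    (hlip : ∀ x y : E, ‖gradient f x - gradient f y‖ ≤ L * ‖x - y‖)
    (gr gc : E) (hgr : gr ≠ 0) (hgc : gc ≠ 0)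
    (grp gcp : E)
    (hgrp : grp = gr - (⟪gr, gc⟫ / ‖gc‖ ^ 2) • gc)
    (hgcp : gcp = gc - (⟪gr, gc⟫ / ‖gr‖ ^ 2) • gr)
    (cosθ : ℝ) (hcos : cosθ = ⟪gr, gc⟫ / (‖gr‖ * ‖gc‖))
    (hcos_lb : -1 < cosθ) (hcos_ub : cosθ ≤ 0)
    (wt : E) (hw : gradient f wt = gr + gc)
    (η : ℝ) (hη0 : 0 < η) (hηL : η ≤ 1 / L)
    (wt1 : E) (hupdate : wt1 = wt + (η / 2) • (grp + gcp)) :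
    f wt1 - f wt > 0 := by
  have hgrp' : grp = rejection gr gc := hgrp
  have hgcp' : gcp = rejection gc gr := by rw [hgcp, rejection, real_inner_comm]
  subst hgrp' hgcp' hupdate hcos
  have hcs := sq_inner_lt_of_abs_cos_lt_one hgr hgc (abs_lt.mpr ⟨hcos_lb, by linarith⟩)
  have hLη : L * η ≤ 1 := by rwa [le_div_iff₀ hL, mul_comm] at hηL
  have hstep := le_sub_of_gradient_step hL.le hf hlip hη0.le hLη wt
    (rejection gr gc + rejection gc gr)
  rw [hw, two_inner_add_rejection_sub_norm_sq] at hstep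
  have hgap : 0 < ‖rejection gr gc - rejection gc gr‖ :=
    norm_pos_iff.mpr (rejection_sub_rejection_ne_zero hcs)
  exact lt_of_lt_of_le (by positivity) hstep
end

section
/- The first-order gain of the projected update in the direction of the true gradient is always nonnegative: for any nonzero g_r, g_c, one has ⟨g_r + g_c, g_r⁺ + g_c⁺⟩ ≥ 0. -/
open RealInnerProductSpace

/-! Each projected gradient is the component of one gradient orthogonal to the other, so
`⟪g_c, g_r⁺⟫ = ⟪g_r, g_c⁺⟫ = 0`, while `⟪g_r, g_r⁺⟫ = ‖g_r⁺‖²` and `⟪g_c, g_c⁺⟫ = ‖g_c⁺‖²`.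
Hence the gain equals `‖g_r⁺‖² + ‖g_c⁺‖²`. -/

section

variable {E : Type*} [NormedAddCommGroup E] [InnerProductSpace ℝ E]

theorem real_inner_sub_inner_div_norm_sq_smul_eq_zero (u v : E) :
    ⟪v, u - (⟪u, v⟫ / ‖v‖ ^ 2) • v⟫ = 0 := by
  rcases eq_or_ne v 0 with rfl | hv
  · simp
  have hv : ‖v‖ ^ 2 ≠ 0 := by positivity
  rw [inner_sub_right, inner_smul_right, real_inner_self_eq_norm_sq, real_inner_comm,
    div_mul_cancel₀ _ hv, sub_self]

theorem real_inner_self_sub_inner_div_norm_sq_smul (u v : E) :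
    ⟪u, u - (⟪u, v⟫ / ‖v‖ ^ 2) • v⟫ = ‖u - (⟪u, v⟫ / ‖v‖ ^ 2) • v‖ ^ 2 := by
  set p := u - (⟪u, v⟫ / ‖v‖ ^ 2) • v
  have hu : u = p + (⟪u, v⟫ / ‖v‖ ^ 2) • v := (sub_add_cancel _ _).symm
  have hvp : ⟪v, p⟫ = 0 := real_inner_sub_inner_div_norm_sq_smul_eq_zero u v
  conv_lhs => rw [hu]
  rw [inner_add_left, real_inner_self_eq_norm_sq, real_inner_smul_left, hvp, mul_zero, add_zero]

end

theorem pcrpo_first_order_gain_nonneg_general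
    {E : Type*} [NormedAddCommGroup E] [InnerProductSpace ℝ E]
    (gr gc : E)
    (grp gcp : E)
    (hgrp : grp = gr - (⟪gr, gc⟫ / ‖gc‖ ^ 2) • gc)
    (hgcp : gcp = gc - (⟪gr, gc⟫ / ‖gr‖ ^ 2) • gr) :
    ⟪gr + gc, grp + gcp⟫ ≥ 0 := by
  rw [← real_inner_comm gr gc] at hgcp
  have hcr : ⟪gc, grp⟫ = 0 := hgrp ▸ real_inner_sub_inner_div_norm_sq_smul_eq_zero gr gc
  have hrc : ⟪gr, gcp⟫ = 0 := hgcp ▸ real_inner_sub_inner_div_norm_sq_smul_eq_zero gc gr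
  have hrr : ⟪gr, grp⟫ = ‖grp‖ ^ 2 := hgrp ▸ real_inner_self_sub_inner_div_norm_sq_smul gr gc
  have hcc : ⟪gc, gcp⟫ = ‖gcp‖ ^ 2 := hgcp ▸ real_inner_self_sub_inner_div_norm_sq_smul gc gr
  calc ⟪gr + gc, grp + gcp⟫ = ‖grp‖ ^ 2 + ‖gcp‖ ^ 2 := by
        rw [inner_add_left, inner_add_right, inner_add_right, hcr, hrc, hrr, hcc]
        ring
    _ ≥ 0 := by positivity

/-- The first-order gain of the projected update in the direction
of the true gradient is always nonnegative. -/
theorem pcrpo_first_order_gain_nonneg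
    {E : Type*} [NormedAddCommGroup E] [InnerProductSpace ℝ E]
    (gr gc : E) (hgr : gr ≠ 0) (hgc : gc ≠ 0)
    (grp gcp : E)
    (hgrp : grp = gr - (⟪gr, gc⟫ / ‖gc‖ ^ 2) • gc)
    (hgcp : gcp = gc - (⟪gr, gc⟫ / ‖gr‖ ^ 2) • gr) :
    ⟪gr + gc, grp + gcp⟫ ≥ 0 :=
  pcrpo_first_order_gain_nonneg_general gr gc grp gcp hgrp hgcp
end

section
/- The inner product between the two projected gradients satisfies ⟨g_r⁺, g_c⁺⟩ = −⟨g_r,g_c⟩·(1 − cos²θ) = −⟨g_r,g_c⟩·sin²θ; in particular, if the original gradients conflict (⟨g_r,g_c⟩ ≤ 0) then the projected gradients no longer conflict (⟨g_r⁺,g_c⁺⟩ ≥ 0). -/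
/-!
Expanding the inner product, each of the two cross terms `⟪gr, (a / ‖gr‖²) • gr⟫` and
`⟪(a / ‖gc‖²) • gc, gc⟫` equals `a = ⟪gr, gc⟫`, and the doubly projected term equals
`a · cos²θ`; hence `⟪gr⁺, gc⁺⟫ = a - 2a + a cos²θ = -a (1 - cos²θ)`. Since `cos²θ ≤ 1` by
Cauchy–Schwarz, the sign of `⟪gr⁺, gc⁺⟫` is opposite to that of `a`.
-/

open RealInnerProductSpace

section ProjectedGradients

variable {F : Type*} [SeminormedAddCommGroup F] [InnerProductSpace ℝ F]

-- The division is junk when `‖x‖ = 0`, but then `⟪x, y⟫ = 0` by Cauchy–Schwarz.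
lemma real_inner_div_norm_sq_mul_norm_sq_left (x y : F) :
    ⟪x, y⟫ / ‖x‖ ^ 2 * ‖x‖ ^ 2 = ⟪x, y⟫ :=
  div_mul_cancel_of_imp fun h => by
    have hx : ‖x‖ = 0 := pow_eq_zero_iff two_ne_zero |>.mp h
    simpa [hx] using abs_real_inner_le_norm x y

lemma real_inner_div_norm_sq_mul_norm_sq_right (x y : F) :
    ⟪x, y⟫ / ‖y‖ ^ 2 * ‖y‖ ^ 2 = ⟪x, y⟫ := by
  rw [real_inner_comm]
  exact real_inner_div_norm_sq_mul_norm_sq_left y x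

lemma real_inner_div_norm_mul_norm_sq_le_one (x y : F) :
    (⟪x, y⟫ / (‖x‖ * ‖y‖)) ^ 2 ≤ 1 :=
  (sq_le_one_iff_abs_le_one _).mpr (abs_real_inner_div_norm_mul_norm_le_one x y)

lemma real_inner_sub_smul_sub_smul (x y : F) :
    ⟪x - (⟪x, y⟫ / ‖y‖ ^ 2) • y, y - (⟪x, y⟫ / ‖x‖ ^ 2) • x⟫ =
      -⟪x, y⟫ * (1 - (⟪x, y⟫ / (‖x‖ * ‖y‖)) ^ 2) := by
  have hcross_left := real_inner_div_norm_sq_mul_norm_sq_left x y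
  have hcross_right := real_inner_div_norm_sq_mul_norm_sq_right x y
  simp only [inner_sub_left, inner_sub_right, real_inner_smul_left, real_inner_smul_right,
    real_inner_self_eq_norm_sq, real_inner_comm x y]
  rw [div_pow, mul_pow]
  linear_combination -hcross_left - hcross_right

lemma real_inner_sub_smul_sub_smul_nonneg {x y : F} (h : ⟪x, y⟫ ≤ 0) :
    0 ≤ ⟪x - (⟪x, y⟫ / ‖y‖ ^ 2) • y, y - (⟪x, y⟫ / ‖x‖ ^ 2) • x⟫ := by
  rw [real_inner_sub_smul_sub_smul]
  exact mul_nonneg (neg_nonneg.mpr h) (sub_nonneg.mpr (real_inner_div_norm_mul_norm_sq_le_one x y))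

end ProjectedGradients

theorem pcrpo_projected_gradients_no_conflict_general
    {E : Type*} [NormedAddCommGroup E] [InnerProductSpace ℝ E]
    (gr gc : E)
    (grp gcp : E)
    (hgrp : grp = gr - (⟪gr, gc⟫ / ‖gc‖ ^ 2) • gc)
    (hgcp : gcp = gc - (⟪gr, gc⟫ / ‖gr‖ ^ 2) • gr)
    (cosθ : ℝ) (hcos : cosθ = ⟪gr, gc⟫ / (‖gr‖ * ‖gc‖)) :
    ⟪grp, gcp⟫ = -⟪gr, gc⟫ * (1 - cosθ ^ 2) ∧
    (⟪gr, gc⟫ ≤ 0 → ⟪grp, gcp⟫ ≥ 0) := by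
  subst hgrp hgcp hcos
  exact ⟨real_inner_sub_smul_sub_smul gr gc, real_inner_sub_smul_sub_smul_nonneg⟩

/-- The inner product between the two projected gradients equals
`−⟨g_r,g_c⟩·(1 − cos²θ) = −⟨g_r,g_c⟩·sin²θ`; in particular, conflicting
original gradients give non-conflicting projected gradients. -/
theorem pcrpo_projected_gradients_no_conflict
    {E : Type*} [NormedAddCommGroup E] [InnerProductSpace ℝ E]
    (gr gc : E) (hgr : gr ≠ 0) (hgc : gc ≠ 0)
    (grp gcp : E)
    (hgrp : grp = gr - (⟪gr, gc⟫ / ‖gc‖ ^ 2) • gc)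
    (hgcp : gcp = gc - (⟪gr, gc⟫ / ‖gr‖ ^ 2) • gr)
    (cosθ : ℝ) (hcos : cosθ = ⟪gr, gc⟫ / (‖gr‖ * ‖gc‖)) :
    ⟪grp, gcp⟫ = -⟪gr, gc⟫ * (1 - cosθ ^ 2) ∧
    (⟪gr, gc⟫ ≤ 0 → ⟪grp, gcp⟫ ≥ 0) :=
  pcrpo_projected_gradients_no_conflict_general gr gc grp gcp hgrp hgcp cosθ hcos
end

section
/- Comparison of the two gradient-manipulation strategies for non-conflicting gradients: if ⟨g_r,g_c⟩ > 0 (i.e. θ < 90°), then ‖(g_r + g_c)/2‖ > ‖(g_r⁺ + g_c⁺)/2‖, i.e. the averaged gradient has strictly larger norm than the averaged projected gradient, so averaging avoids gradient degradation in this regime. -/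
/-!
Write `A = ‖g_r‖²`, `B = ‖g_c‖²`, `s = ⟪g_r, g_c⟫`. The sum of the projected gradients is
`(1 - s/A) • g_r + (1 - s/B) • g_c`, and clearing denominators,
`AB (‖g_r + g_c‖² - ‖g_r⁺ + g_c⁺‖²) = s (4AB - 2s² + s(A + B))`,
which is positive for `s > 0` because Cauchy–Schwarz gives `s² ≤ AB`.
-/

open RealInnerProductSpace

theorem norm_smul_add_smul_sq_real {E : Type*} [NormedAddCommGroup E] [InnerProductSpace ℝ E]
    (a b : ℝ) (x y : E) :
    ‖a • x + b • y‖ ^ 2 = a ^ 2 * ‖x‖ ^ 2 + 2 * (a * b * ⟪x, y⟫) + b ^ 2 * ‖y‖ ^ 2 := by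
  rw [norm_add_sq_real, norm_smul, norm_smul, real_inner_smul_left, real_inner_smul_right,
    mul_pow, mul_pow, Real.norm_eq_abs, Real.norm_eq_abs, sq_abs, sq_abs]
  ring

theorem one_sub_div_quadratic_lt {A B s : ℝ} (hA : 0 < A) (hB : 0 < B) (hs : 0 < s)
    (hsAB : s ^ 2 ≤ A * B) :
    (1 - s / A) ^ 2 * A + 2 * ((1 - s / A) * (1 - s / B) * s) + (1 - s / B) ^ 2 * B
      < A + 2 * s + B := by
  rw [← mul_lt_mul_iff_of_pos_right (mul_pos hA hB)]
  have cleared : ((1 - s / A) ^ 2 * A + 2 * ((1 - s / A) * (1 - s / B) * s)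
      + (1 - s / B) ^ 2 * B) * (A * B)
      = (A + 2 * s + B) * (A * B) - s * (4 * (A * B) - 2 * s ^ 2 + s * (A + B)) := by
    field_simp
    ring
  rw [cleared, sub_lt_self_iff]
  have factor_pos : 0 < 4 * (A * B) - 2 * s ^ 2 + s * (A + B) := by nlinarith [mul_pos hA hB]
  exact mul_pos hs factor_pos

theorem norm_add_sub_projections_lt {E : Type*} [NormedAddCommGroup E] [InnerProductSpace ℝ E]
    {x y : E} (hxy : 0 < ⟪x, y⟫) :
    ‖(x - (⟪x, y⟫ / ‖y‖ ^ 2) • y) + (y - (⟪x, y⟫ / ‖x‖ ^ 2) • x)‖ < ‖x + y‖ := by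
  have hx : 0 < ‖x‖ := norm_pos_iff.2 (by rintro rfl; simp at hxy)
  have hy : 0 < ‖y‖ := norm_pos_iff.2 (by rintro rfl; simp at hxy)
  have cauchy_schwarz : ⟪x, y⟫ ^ 2 ≤ ‖x‖ ^ 2 * ‖y‖ ^ 2 := by
    rw [← mul_pow, ← sq_abs]
    exact pow_le_pow_left₀ (abs_nonneg _) (abs_real_inner_le_norm x y) 2
  have regroup : (x - (⟪x, y⟫ / ‖y‖ ^ 2) • y) + (y - (⟪x, y⟫ / ‖x‖ ^ 2) • x)
      = (1 - ⟪x, y⟫ / ‖x‖ ^ 2) • x + (1 - ⟪x, y⟫ / ‖y‖ ^ 2) • y := by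
    module
  rw [regroup]
  apply lt_of_pow_lt_pow_left₀ 2 (norm_nonneg _)
  rw [norm_smul_add_smul_sq_real, norm_add_sq_real]
  exact one_sub_div_quadratic_lt (by positivity) (by positivity) hxy cauchy_schwarz

theorem pcrpo_averaging_beats_projection_nonconflict_general
    {E : Type*} [NormedAddCommGroup E] [InnerProductSpace ℝ E]
    (gr gc : E)
    (grp gcp : E)
    (hgrp : grp = gr - (⟪gr, gc⟫ / ‖gc‖ ^ 2) • gc)
    (hgcp : gcp = gc - (⟪gr, gc⟫ / ‖gr‖ ^ 2) • gr)
    (hpos : ⟪gr, gc⟫ > 0) :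
    ‖(1 / 2 : ℝ) • (gr + gc)‖ > ‖(1 / 2 : ℝ) • (grp + gcp)‖ := by
  subst hgrp hgcp
  rw [gt_iff_lt, norm_smul, norm_smul]
  exact mul_lt_mul_of_pos_left (norm_add_sub_projections_lt hpos) (by norm_num)

/-- For non-conflicting gradients (`⟨g_r,g_c⟩ > 0`), the averaged
gradient has strictly larger norm than the averaged projected gradient. -/
theorem pcrpo_averaging_beats_projection_nonconflict
    {E : Type*} [NormedAddCommGroup E] [InnerProductSpace ℝ E]
    (gr gc : E) (hgr : gr ≠ 0) (hgc : gc ≠ 0)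
    (grp gcp : E)
    (hgrp : grp = gr - (⟪gr, gc⟫ / ‖gc‖ ^ 2) • gc)
    (hgcp : gcp = gc - (⟪gr, gc⟫ / ‖gr‖ ^ 2) • gr)
    (hpos : ⟪gr, gc⟫ > 0) :
    ‖(1 / 2 : ℝ) • (gr + gc)‖ > ‖(1 / 2 : ℝ) • (grp + gcp)‖ :=
  pcrpo_averaging_beats_projection_nonconflict_general gr gc grp gcp hgrp hgcp hpos
end
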